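/- arXiv:1010.5287 — 2 statements merged into one kernel-verified Lean document; each statement's English description precedes it below -/
import Mathlib

section
/- Fix nonnegative integers m, n. The total number of admissible sequences (s_k)_{−m ≤ k ≤ n} with center 0 equals the binomial coefficient C(m+n, m). In particular this set is finite. -/
/-- `s` (viewed on the index range `[-m, n]`) is an admissible sequence with center `0`:
positive entries, nondecreasing with steps `0` or `1` before `0`, nonincreasing with
steps `0` or `1` from `0` on, and first and last terms at most `1`. -/
def IsAdmissibleCenter0 (m n : ℕ) (s : ℤ → ℤ) : Prop :=
  (∀ k, -(m : ℤ) ≤ k → k ≤ (n : ℤ) → 0 < s k) ∧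
  (∀ i, -(m : ℤ) ≤ i → i < 0 → s i ≤ s (i + 1) ∧ s (i + 1) ≤ s i + 1) ∧
  (∀ i, 0 ≤ i → i < (n : ℤ) → s (i + 1) ≤ s i ∧ s i - 1 ≤ s (i + 1)) ∧
  s (-(m : ℤ)) ≤ 1 ∧ s (n : ℤ) ≤ 1

/-- Normalization: `s` vanishes outside the index range `[-m, n]`. -/
def NormalizedSeq (m n : ℕ) (s : ℤ → ℤ) : Prop :=
  ∀ k, k < -(m : ℤ) ∨ (n : ℤ) < k → s k = 0

/-!
The largest admissible sequence is the tent `k ↦ 1 + m + min k 0`. Every admissible sequence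
falls one short of the tent's step (`+1` left of the center, `0` right of it) at exactly the
positions `j ∈ [-m, n)` of some set `S`, and is recovered from `S` by subtracting from the tent
the number of such positions below `k`. Since the sequence starts and ends at `1`, `S` has exactly
`m` elements, and conversely every `m`-element subset of `[-m, n)` gives an admissible sequence,
its values staying positive because at most `min (k + m) m` deficits lie below `k`. Hence the
admissible sequences are counted by `C(m + n, m)`.
-/

open Finset

theorem Int.eqOn_Icc_of_eq_of_forall_sub_eq {G : Type*} [AddGroup G] {f g : ℤ → G} {a b : ℤ}
    (ha : f a = g a) (hstep : ∀ j, a ≤ j → j < b → f (j + 1) - f j = g (j + 1) - g j) :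
    Set.EqOn f g (Set.Icc a b) := by
  rintro k ⟨hak, hkb⟩
  induction k, hak using Int.leInduction with
  | base => exact ha
  | succ j hj ih =>
    calc f (j + 1) = (f (j + 1) - f j) + f j := (sub_add_cancel _ _).symm
      _ = (g (j + 1) - g j) + g j := by rw [hstep j hj (by omega), ih (by omega)]
      _ = g (j + 1) := sub_add_cancel _ _

namespace AdmissibleCenter0

def tentStep (j : ℤ) : ℤ := if j < 0 then 1 else 0

noncomputable def ofDeficits (m n : ℕ) (S : Finset ℤ) (k : ℤ) : ℤ :=
  if k < -(m : ℤ) ∨ (n : ℤ) < k then 0 else 1 + m + min k 0 - #(S ∩ Ico (-(m : ℤ)) k)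

noncomputable def deficits (m n : ℕ) (s : ℤ → ℤ) : Finset ℤ :=
  (Ico (-(m : ℤ)) n).filter fun j => s (j + 1) - s j = tentStep j - 1

variable {m n : ℕ}

theorem mem_deficits {s : ℤ → ℤ} {j : ℤ} :
    j ∈ deficits m n s ↔ j ∈ Ico (-(m : ℤ)) n ∧ s (j + 1) - s j = tentStep j - 1 :=
  mem_filter

theorem deficits_subset (s : ℤ → ℤ) : deficits m n s ⊆ Ico (-(m : ℤ)) n :=
  filter_subset _ _

theorem ofDeficits_succ_sub (S : Finset ℤ) {j : ℤ} (hmj : -(m : ℤ) ≤ j) (hjn : j < n) :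
    ofDeficits m n S (j + 1) - ofDeficits m n S j = tentStep j - if j ∈ S then 1 else 0 := by
  have hcard :
      #(S ∩ Ico (-(m : ℤ)) (j + 1)) = #(S ∩ Ico (-(m : ℤ)) j) + if j ∈ S then 1 else 0 := by
    rw [← insert_Ico_right_eq_Ico_add_one hmj]
    split_ifs with hj
    · rw [inter_insert_of_mem hj, card_insert_of_notMem (by simp)]
    · rw [inter_insert_of_notMem hj, add_zero]
  unfold ofDeficits tentStep
  rw [if_neg (by omega), if_neg (by omega), hcard]
  split_ifs <;> push_cast <;> omega

theorem ofDeficits_neg (S : Finset ℤ) : ofDeficits m n S (-(m : ℤ)) = 1 := by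
  simp [ofDeficits]

theorem ofDeficits_natCast {S : Finset ℤ} (hS : S ⊆ Ico (-(m : ℤ)) n) :
    ofDeficits m n S n = 1 + m - #S := by
  simp [ofDeficits, inter_eq_left.2 hS]

theorem ofDeficits_pos {S : Finset ℤ} (hS : #S ≤ m) {k : ℤ} (hmk : -(m : ℤ) ≤ k)
    (hkn : k ≤ n) :
    0 < ofDeficits m n S k := by
  have hle_card : #(S ∩ Ico (-(m : ℤ)) k) ≤ #S := card_le_card inter_subset_left
  have hle_len : #(S ∩ Ico (-(m : ℤ)) k) ≤ (k + m).toNat :=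
    (card_le_card inter_subset_right).trans (by simp)
  unfold ofDeficits
  rw [if_neg (by omega)]
  omega

theorem isAdmissibleCenter0_ofDeficits {S : Finset ℤ}
    (hS : S ∈ (Ico (-(m : ℤ)) n).powersetCard m) :
    IsAdmissibleCenter0 m n (ofDeficits m n S) := by
  obtain ⟨hsub, hcard⟩ := mem_powersetCard.1 hS
  refine ⟨fun k => ofDeficits_pos hcard.le, fun j hmj hj => ?_, fun j hj hjn => ?_,
    (ofDeficits_neg S).le, by rw [ofDeficits_natCast hsub, hcard]; simp⟩
  · have := ofDeficits_succ_sub (n := n) S hmj (by omega)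
    unfold tentStep at this
    split_ifs at this <;> omega
  · have := ofDeficits_succ_sub (m := m) S (by omega) hjn
    unfold tentStep at this
    split_ifs at this <;> omega

theorem normalizedSeq_ofDeficits (S : Finset ℤ) : NormalizedSeq m n (ofDeficits m n S) :=
  fun _ hk => if_pos hk

theorem deficits_ofDeficits {S : Finset ℤ} (hS : S ⊆ Ico (-(m : ℤ)) n) :
    deficits m n (ofDeficits m n S) = S := by
  ext j
  rw [mem_deficits]
  constructor
  · rintro ⟨hj, hstep⟩
    rw [mem_Ico] at hj
    rw [ofDeficits_succ_sub S hj.1 hj.2] at hstep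
    split_ifs at hstep with h
    · exact h
    · omega
  · intro hj
    have hj' := hS hj
    rw [mem_Ico] at hj'
    rw [ofDeficits_succ_sub S hj'.1 hj'.2, if_pos hj]
    exact ⟨hS hj, rfl⟩

theorem injOn_ofDeficits : Set.InjOn (ofDeficits m n) {S | S ⊆ Ico (-(m : ℤ)) n} :=
  Set.LeftInvOn.injOn fun _ hS => deficits_ofDeficits hS

variable {s : ℤ → ℤ}

theorem succ_sub_eq_of_isAdmissibleCenter0 (hA : IsAdmissibleCenter0 m n s) {j : ℤ}
    (hmj : -(m : ℤ) ≤ j) (hjn : j < n) :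
    s (j + 1) - s j = tentStep j - if j ∈ deficits m n s then 1 else 0 := by
  by_cases hd : j ∈ deficits m n s
  · rw [if_pos hd]
    exact (mem_deficits.1 hd).2
  · have hne : s (j + 1) - s j ≠ tentStep j - 1 :=
      fun h => hd (mem_deficits.2 ⟨mem_Ico.2 ⟨hmj, hjn⟩, h⟩)
    rw [if_neg hd, sub_zero]
    unfold tentStep at hne ⊢
    split_ifs at hne ⊢ with hj
    · have := hA.2.1 j hmj hj
      omega
    · have := hA.2.2.1 j (by omega) hjn
      omega

theorem eqOn_ofDeficits_deficits (hA : IsAdmissibleCenter0 m n s) :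
    Set.EqOn (ofDeficits m n (deficits m n s)) s (Set.Icc (-(m : ℤ)) n) := by
  refine Int.eqOn_Icc_of_eq_of_forall_sub_eq ?_ fun j hmj hjn => ?_
  · have := hA.1 (-(m : ℤ)) le_rfl (by omega)
    have := hA.2.2.2.1
    rw [ofDeficits_neg]
    omega
  · rw [ofDeficits_succ_sub _ hmj hjn, succ_sub_eq_of_isAdmissibleCenter0 hA hmj hjn]

theorem ofDeficits_deficits (hN : NormalizedSeq m n s) (hA : IsAdmissibleCenter0 m n s) :
    ofDeficits m n (deficits m n s) = s := by
  funext k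
  by_cases hk : k < -(m : ℤ) ∨ (n : ℤ) < k
  · rw [hN k hk, normalizedSeq_ofDeficits _ k hk]
  · exact eqOn_ofDeficits_deficits hA ⟨by omega, by omega⟩

theorem card_deficits (hA : IsAdmissibleCenter0 m n s) : #(deficits m n s) = m := by
  have hn : ofDeficits m n (deficits m n s) n = s n :=
    eqOn_ofDeficits_deficits hA ⟨by omega, le_rfl⟩
  rw [ofDeficits_natCast (deficits_subset s)] at hn
  have := hA.1 n (by omega) le_rfl
  have := hA.2.2.2.2
  omega

theorem image_ofDeficits_powersetCard :
    ofDeficits m n '' ↑((Ico (-(m : ℤ)) n).powersetCard m)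
      = {s : ℤ → ℤ | NormalizedSeq m n s ∧ IsAdmissibleCenter0 m n s} := by
  ext s
  constructor
  · rintro ⟨S, hS, rfl⟩
    exact ⟨normalizedSeq_ofDeficits S, isAdmissibleCenter0_ofDeficits hS⟩
  · rintro ⟨hN, hA⟩
    exact ⟨deficits m n s, mem_powersetCard.2 ⟨deficits_subset s, card_deficits hA⟩,
      ofDeficits_deficits hN hA⟩

end AdmissibleCenter0

theorem stmt6 (m n : ℕ) :
    {s : ℤ → ℤ | NormalizedSeq m n s ∧ IsAdmissibleCenter0 m n s}.Finite ∧
    Set.ncard {s : ℤ → ℤ | NormalizedSeq m n s ∧ IsAdmissibleCenter0 m n s}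
      = Nat.choose (m + n) m := by
  rw [← AdmissibleCenter0.image_ofDeficits_powersetCard]
  refine ⟨(Finset.finite_toSet _).image _, ?_⟩
  have hinj : Set.InjOn (AdmissibleCenter0.ofDeficits m n) ↑((Ico (-(m : ℤ)) n).powersetCard m) :=
    AdmissibleCenter0.injOn_ofDeficits.mono fun S hS => (mem_powersetCard.1 hS).1
  rw [hinj.ncard_image,
    Set.ncard_coe_finset, card_powersetCard, Int.card_Ico]
  congr 1
  omega
end

section
/- Let q₁, q₂ be nonzero complex numbers with q₂ ≠ 1, and let W(z₁,z₂) = z₁ + z₂ + q₁²q₂/(z₁z₂²) + (1+q₂)q₁/z₂ for (z₁,z₂) ∈ (ℂ*)². Then the system z₁∂W/∂z₁ = 0, z₂∂W/∂z₂ = 0 has exactly 4 solutions in (ℂ*)². -/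
/-!
Write q₁ = a², q₂ = b². Clearing denominators turns the critical equations into
z₁²z₂² = q₁²q₂ and z₁z₂³ = 2q₁²q₂ + (1+q₂)q₁z₁z₂. The first says z₁z₂ = a²w with w = ±b;
the second then reduces to z₂² = a²(1+w)², so the solutions are ±(aw/(1+w), a(1+w)).
Their second coordinates ±a(1±b) are pairwise distinct since a ≠ 0 and b ≠ 0, ±1.
-/

section Derivatives

variable {𝕜 : Type*} [NontriviallyNormedField 𝕜]

theorem mul_deriv_add_div_mul (c d e K : 𝕜) {z : 𝕜} (hz : z ≠ 0) :
    z * deriv (fun w => w + c + K / (w * d) + e) z = z - K / (z * d) := by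
  have hf : (fun w => w + c + K / (w * d) + e) = fun w => w + c + K / d * w⁻¹ + e := by
    funext w; ring
  have h : HasDerivAt (fun w => w + c + K / d * w⁻¹ + e) _ z :=
    (((hasDerivAt_id z).add_const c).add ((hasDerivAt_inv hz).const_mul (K / d))).add_const e
  rw [hf, h.deriv]
  field_simp
  ring

theorem mul_deriv_add_div_mul_sq (c d K L : 𝕜) {z : 𝕜} (hz : z ≠ 0) :
    z * deriv (fun w => c + w + K / (d * w ^ 2) + L / w) z
      = z - 2 * K / (d * z ^ 2) - L / z := by
  have hf : (fun w => c + w + K / (d * w ^ 2) + L / w)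
      = fun w => c + w + K / d * (w ^ 2)⁻¹ + L * w⁻¹ := by
    funext w; ring
  have h : HasDerivAt (fun w => c + w + K / d * (w ^ 2)⁻¹ + L * w⁻¹) _ z :=
    (((hasDerivAt_id z).const_add c).add
      (((hasDerivAt_pow 2 z).inv (pow_ne_zero 2 hz)).const_mul (K / d))).add
      ((hasDerivAt_inv hz).const_mul L)
  rw [hf, h.deriv]
  field_simp
  ring

end Derivatives

section Solutions

variable {K : Type*} [Field K]

theorem critical_eqs_iff {A L u v : K} (hA : A ≠ 0) :
    (u ≠ 0 ∧ v ≠ 0 ∧ u - A / (u * v ^ 2) = 0 ∧ v - 2 * A / (u * v ^ 2) - L / v = 0) ↔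
      (u ^ 2 * v ^ 2 = A ∧ u * v ^ 3 = 2 * A + L * (u * v)) := by
  constructor
  · rintro ⟨hu, hv, h₁, h₂⟩
    field_simp at h₁ h₂
    exact ⟨by linear_combination h₁, by linear_combination h₂⟩
  · rintro ⟨h₁, h₂⟩
    have huv : u * v ≠ 0 := fun h => hA (by rw [← h₁, ← mul_pow, h, zero_pow two_ne_zero])
    have hu := left_ne_zero_of_mul huv
    have hv := right_ne_zero_of_mul huv
    refine ⟨hu, hv, ?_, ?_⟩
    · field_simp
      linear_combination h₁
    · field_simp
      linear_combination h₂

def criticalPoint (a w : K) : K × K := (a * w / (1 + w), a * (1 + w))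

theorem critical_system_branch_iff {q₁ q₂ a w u v : K} (ha : a ^ 2 = q₁) (hw : w ^ 2 = q₂)
    (ha₀ : a ≠ 0) (hw₀ : w ≠ 0) (hw₁ : 1 + w ≠ 0) :
    (u * v = q₁ * w ∧ u * v ^ 3 = 2 * (q₁ ^ 2 * q₂) + (1 + q₂) * q₁ * (u * v)) ↔
      (u, v) = criticalPoint a w ∨ (u, v) = -criticalPoint a w := by
  subst ha hw
  simp only [criticalPoint, Prod.neg_mk, Prod.mk.injEq]
  constructor
  · rintro ⟨h₁, h₂⟩
    have hv : (v - a * (1 + w)) * (v + a * (1 + w)) = 0 := by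
      apply mul_left_cancel₀ (mul_ne_zero (pow_ne_zero 2 ha₀) hw₀)
      linear_combination h₂ - (v ^ 2 - (1 + w ^ 2) * a ^ 2) * h₁
    rcases mul_eq_zero.1 hv with hv | hv
    · refine .inl ⟨?_, by linear_combination hv⟩
      field_simp
      apply mul_left_cancel₀ ha₀
      linear_combination h₁ - u * hv
    · refine .inr ⟨?_, by linear_combination hv⟩
      field_simp
      apply mul_left_cancel₀ ha₀
      linear_combination -h₁ + u * hv
  · rintro (⟨rfl, rfl⟩ | ⟨rfl, rfl⟩) <;> constructor <;> field_simp <;> ring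

theorem critical_system_iff {q₁ q₂ a b u v : K} (ha : a ^ 2 = q₁) (hb : b ^ 2 = q₂)
    (ha₀ : a ≠ 0) (hb₀ : b ≠ 0) (hb₁ : 1 + b ≠ 0) (hb₂ : 1 - b ≠ 0) :
    (u ^ 2 * v ^ 2 = q₁ ^ 2 * q₂ ∧ u * v ^ 3 = 2 * (q₁ ^ 2 * q₂) + (1 + q₂) * q₁ * (u * v)) ↔
      (u, v) ∈ ({criticalPoint a b, -criticalPoint a b, criticalPoint a (-b),
        -criticalPoint a (-b)} : Set (K × K)) := by
  have hsq : u ^ 2 * v ^ 2 = q₁ ^ 2 * q₂ ↔ u * v = q₁ * b ∨ u * v = q₁ * -b := by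
    rw [← mul_pow, ← hb, ← mul_pow, mul_neg, sq_eq_sq_iff_eq_or_eq_neg]
  rw [hsq, or_and_right, critical_system_branch_iff ha hb ha₀ hb₀ hb₁,
    critical_system_branch_iff ha (by rw [neg_sq, hb]) ha₀ (neg_ne_zero.2 hb₀)
      (by rwa [← sub_eq_add_neg])]
  simp only [Set.mem_insert_iff, Set.mem_singleton_iff, or_assoc]

theorem ncard_criticalPoints [NeZero (2 : K)] {a b : K} (ha₀ : a ≠ 0) (hb₀ : b ≠ 0)
    (hb₁ : 1 + b ≠ 0) (hb₂ : 1 - b ≠ 0) :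
    ({criticalPoint a b, -criticalPoint a b, criticalPoint a (-b),
      -criticalPoint a (-b)} : Set (K × K)).ncard = 4 := by
  refine Set.ncard_eq_four.2 ⟨_, _, _, _, ?_, ?_, ?_, ?_, ?_, ?_, rfl⟩ <;>
    refine ne_of_apply_ne Prod.snd fun h => ?_ <;>
    simp only [criticalPoint, Prod.snd_neg] at h
  · exact mul_ne_zero (mul_ne_zero two_ne_zero ha₀) hb₁ (by linear_combination h)
  · exact mul_ne_zero (mul_ne_zero two_ne_zero ha₀) hb₀ (by linear_combination h)
  · exact mul_ne_zero two_ne_zero ha₀ (by linear_combination h)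
  · exact mul_ne_zero two_ne_zero ha₀ (by linear_combination -h)
  · exact mul_ne_zero (mul_ne_zero two_ne_zero ha₀) hb₀ (by linear_combination -h)
  · exact mul_ne_zero (mul_ne_zero two_ne_zero ha₀) hb₂ (by linear_combination h)

end Solutions

/-- The critical-point equations of `W = z₁ + z₂ + q₁²q₂/(z₁z₂²) + (1+q₂)q₁/z₂`
have exactly `4` solutions in `(ℂ*)²` when `q₁, q₂ ≠ 0` and `q₂ ≠ 1`. -/
theorem stmt15 (q₁ q₂ : ℂ) (hq₁ : q₁ ≠ 0) (hq₂ : q₂ ≠ 0) (hq₂' : q₂ ≠ 1) :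
    Set.ncard {p : ℂ × ℂ | p.1 ≠ 0 ∧ p.2 ≠ 0 ∧
        p.1 * deriv (fun z : ℂ =>
          z + p.2 + q₁ ^ 2 * q₂ / (z * p.2 ^ 2) + (1 + q₂) * q₁ / p.2) p.1 = 0 ∧
        p.2 * deriv (fun z : ℂ =>
          p.1 + z + q₁ ^ 2 * q₂ / (p.1 * z ^ 2) + (1 + q₂) * q₁ / z) p.2 = 0}
      = 4 := by
  obtain ⟨a, ha⟩ := IsAlgClosed.exists_pow_nat_eq q₁ two_pos
  obtain ⟨b, hb⟩ := IsAlgClosed.exists_pow_nat_eq q₂ two_pos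
  have ha₀ : a ≠ 0 := by rintro rfl; exact hq₁ (by rw [← ha, zero_pow two_ne_zero])
  have hb₀ : b ≠ 0 := by rintro rfl; exact hq₂ (by rw [← hb, zero_pow two_ne_zero])
  have hb₁ : 1 + b ≠ 0 := fun h => hq₂' (by linear_combination -hb + (b - 1) * h)
  have hb₂ : 1 - b ≠ 0 := fun h => hq₂' (by linear_combination -hb - (1 + b) * h)
  have hA : q₁ ^ 2 * q₂ ≠ 0 := mul_ne_zero (pow_ne_zero 2 hq₁) hq₂
  convert ncard_criticalPoints ha₀ hb₀ hb₁ hb₂ using 2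
  ext ⟨u, v⟩
  rw [Set.mem_ofPred_eq, ← critical_system_iff ha hb ha₀ hb₀ hb₁ hb₂, ← critical_eqs_iff hA]
  refine and_congr_right fun hu => and_congr_right fun hv => ?_
  rw [mul_deriv_add_div_mul _ _ _ _ hu, mul_deriv_add_div_mul_sq _ _ _ _ hv]
end
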